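/- arXiv:2409.14189 — 2 statements merged into one kernel-verified Lean document; each statement's English description precedes it below -/
import Mathlib

section
/- Let σ be a nondecreasing sigmoidal function satisfying (Σ1), (Σ2), (Σ3), let f: [a,b] → ℝ be bounded, and let F_n be the associated neural network operators. Then for every x ∈ [a,b] at which f is continuous, lim_{n→+∞} F_n(f, x) = f(x). -/
/-!
`Fop σ f a b n x` is a weighted average of the values `f (k / n)` with nonnegative weights
`φ_σ (n x - k)`. Since `φ_σ t = (σ (1 + t) + σ (1 - t) - 1) / 2`, concavity of `σ` on `[0, +∞)`
together with `σ 0 = 1/2` gives `φ_σ ≥ (σ 2 - 1/2) / 2 > 0` on `[-1, 1]`, so the total weight is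
bounded below uniformly in `n`. Nodes with `|k / n - x| ≤ δ` contribute at most the oscillation of
`f` near `x`; each of the at most `n (b - a) + 1` other nodes has weight `≤ σ (1 - n δ) / 2`, and
`n σ (1 - n δ) → 0` by the decay (Σ3).
-/

open Filter Topology MeasureTheory

/-- The density (kernel) function generated by a sigmoidal function. -/
noncomputable def phiFn (σ : ℝ → ℝ) (x : ℝ) : ℝ := (σ (x + 1) - σ (x - 1)) / 2

/-- σ is a (measurable) sigmoidal function. -/
def Sigmoidal (σ : ℝ → ℝ) : Prop :=
  Measurable σ ∧ Tendsto σ atBot (𝓝 0) ∧ Tendsto σ atTop (𝓝 1)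

/-- (Σ1): σ(x) - 1/2 is an odd function. -/
def Sigma1 (σ : ℝ → ℝ) : Prop := ∀ x : ℝ, σ (-x) - 1/2 = -(σ x - 1/2)

/-- (Σ2): σ ∈ C²(ℝ) and σ is concave on [0, +∞). -/
def Sigma2 (σ : ℝ → ℝ) : Prop := ContDiff ℝ 2 σ ∧ ConcaveOn ℝ (Set.Ici 0) σ

/-- (Σ3): σ(x) = O(|x|^{-α-1}) as x → -∞, with α > 0. -/
def Sigma3 (σ : ℝ → ℝ) (α : ℝ) : Prop :=
  0 < α ∧ σ =O[atBot] fun x : ℝ => |x| ^ (-α - 1)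

/-- (Σ4): σ ∈ C^m(ℝ), m ≥ 2, and for each s = 1,…,m there are constants
`K s, C s > 0` with |σ^{(s)}(x)| ≤ C s * |x|^{-β-1} for |x| ≥ K s, where β > m + 1. -/
def Sigma4 (σ : ℝ → ℝ) (m : ℕ) (β : ℝ) (K C : ℕ → ℝ) : Prop :=
  2 ≤ m ∧ (m : ℝ) + 1 < β ∧ ContDiff ℝ m σ ∧
    ∀ s : ℕ, 1 ≤ s → s ≤ m → 0 < K s ∧ 0 < C s ∧
      ∀ x : ℝ, K s ≤ |x| → |iteratedDeriv s σ x| ≤ C s * |x| ^ (-β - 1)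

/-- Algebraic moment of order ν of Φ. -/
noncomputable def algMoment (Φ : ℝ → ℝ) (ν : ℕ) (x : ℝ) : ℝ :=
  ∑' k : ℤ, Φ (x - (k : ℝ)) * ((k : ℝ) - x) ^ ν

/-- (Σ5): the algebraic moments of order j = 1,…,m of φ_σ are constants A j. -/
def Sigma5 (σ : ℝ → ℝ) (m : ℕ) (A : ℕ → ℝ) : Prop :=
  ∀ j : ℕ, 1 ≤ j → j ≤ m → ∀ x : ℝ, algMoment (phiFn σ) j x = A j

/-- Truncated algebraic moment of order ν of Φ (associated with integers a < b). -/
noncomputable def truncMoment (Φ : ℝ → ℝ) (ν : ℕ) (a b : ℤ) (n : ℕ) (u : ℝ) : ℝ :=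
  ∑ k ∈ Finset.Icc ((n : ℤ) * a) ((n : ℤ) * b), Φ (u - (k : ℝ)) * ((k : ℝ) - u) ^ ν

/-- The ν-th discrete absolute moment function of Φ (before taking sup over u). -/
noncomputable def discMoment (Φ : ℝ → ℝ) (ν : ℝ) (u : ℝ) : ℝ :=
  ∑' k : ℤ, |Φ (u - (k : ℝ))| * |u - (k : ℝ)| ^ ν

/-- The Riemann zeta function (as a real series), ζ(p) = ∑_{i≥1} i^{-p}. -/
noncomputable def zetaR (p : ℝ) : ℝ := ∑' i : ℕ, ((i : ℝ) + 1) ^ (-p)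

/-- The NN operator F_n activated by σ. -/
noncomputable def Fop (σ : ℝ → ℝ) (f : ℝ → ℝ) (a b : ℝ) (n : ℕ) (x : ℝ) : ℝ :=
  (∑ k ∈ Finset.Icc ⌈(n : ℝ) * a⌉ ⌊(n : ℝ) * b⌋, f ((k : ℝ) / n) * phiFn σ ((n : ℝ) * x - k)) /
    (∑ k ∈ Finset.Icc ⌈(n : ℝ) * a⌉ ⌊(n : ℝ) * b⌋, phiFn σ ((n : ℝ) * x - k))

/-- The modified NN operator F̃_n (integer endpoints a < b). -/
noncomputable def Ftil (σ : ℝ → ℝ) (f : ℝ → ℝ) (a b : ℤ) (n : ℕ) (x : ℝ) : ℝ :=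
  ∑ k ∈ Finset.Icc ((n : ℤ) * a) ((n : ℤ) * b), f ((k : ℝ) / n) * phiFn σ ((n : ℝ) * x - (k : ℝ))

/-- Sup-norm of g on [a,b]. -/
noncomputable def supNormOn (g : ℝ → ℝ) (a b : ℝ) : ℝ := ⨆ x : Set.Icc a b, |g x|

/-- Modulus of continuity of g on [a,b]. -/
noncomputable def modulus (g : ℝ → ℝ) (a b h : ℝ) : ℝ :=
  sSup {y : ℝ | ∃ u ∈ Set.Icc a b, ∃ v ∈ Set.Icc a b, |u - v| ≤ h ∧ y = |g u - g v|}

/-- Discrete absolute moment (natural order ν) of Φ: sup over u of the moment series. -/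
noncomputable def dmomentN (Φ : ℝ → ℝ) (ν : ℕ) : ℝ :=
  ⨆ u : ℝ, ∑' k : ℤ, |Φ (u - (k : ℝ))| * |u - (k : ℝ)| ^ ν

theorem abs_sum_mul_div_sum_sub_le {ι : Type*} (s : Finset ι) {g w : ι → ℝ} {y ε η : ℝ}
    (hw : ∀ k ∈ s, 0 ≤ w k) (hpos : 0 < ∑ k ∈ s, w k)
    (h : ∀ k ∈ s, |g k - y| * w k ≤ ε * w k + η) :
    |(∑ k ∈ s, g k * w k) / (∑ k ∈ s, w k) - y| ≤ ε + s.card * η / ∑ k ∈ s, w k := by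
  have key : |∑ k ∈ s, g k * w k - y * ∑ k ∈ s, w k| ≤ ε * ∑ k ∈ s, w k + s.card * η :=
    calc |∑ k ∈ s, g k * w k - y * ∑ k ∈ s, w k| = |∑ k ∈ s, (g k - y) * w k| := by
          simp only [Finset.mul_sum, ← Finset.sum_sub_distrib, sub_mul]
      _ ≤ ∑ k ∈ s, |(g k - y) * w k| := Finset.abs_sum_le_sum_abs _ _
      _ = ∑ k ∈ s, |g k - y| * w k :=
          Finset.sum_congr rfl fun k hk => by rw [abs_mul, abs_of_nonneg (hw k hk)]
      _ ≤ ∑ k ∈ s, (ε * w k + η) := Finset.sum_le_sum h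
      _ = ε * ∑ k ∈ s, w k + s.card * η := by
          rw [Finset.sum_add_distrib, ← Finset.mul_sum, Finset.sum_const, nsmul_eq_mul]
  rw [div_sub' hpos.ne', mul_comm _ y, abs_div, abs_of_pos hpos, div_le_iff₀ hpos, add_mul,
    div_mul_cancel₀ _ hpos.ne']
  linarith

section IntegerPoints

variable {A B : ℝ}

theorem mem_Icc_ceil_floor {k : ℤ} : k ∈ Finset.Icc ⌈A⌉ ⌊B⌋ ↔ A ≤ k ∧ (k : ℝ) ≤ B := by
  rw [Finset.mem_Icc, Int.ceil_le, Int.le_floor]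

theorem card_Icc_ceil_floor_le (hAB : A ≤ B) : ((Finset.Icc ⌈A⌉ ⌊B⌋).card : ℝ) ≤ B - A + 1 := by
  have hA := Int.ceil_lt_add_one A
  have hB := Int.floor_le B
  have hlt : ⌈A⌉ < ⌊B⌋ + 2 := by
    rw [← Int.cast_lt (R := ℝ)]; push_cast; linarith [Int.lt_floor_add_one B]
  have hcard : (((Finset.Icc ⌈A⌉ ⌊B⌋).card : ℤ) : ℝ) = ⌊B⌋ + 1 - ⌈A⌉ := by
    rw [Int.card_Icc, Int.toNat_of_nonneg (by omega)]; push_cast; ring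
  rw [← Int.cast_natCast, hcard]
  linarith [Int.le_ceil A]

theorem exists_mem_Icc_ceil_floor_abs_sub_le_one (hAB : A + 1 ≤ B) {u : ℝ}
    (hu : u ∈ Set.Icc A B) : ∃ k ∈ Finset.Icc ⌈A⌉ ⌊B⌋, |u - k| ≤ 1 := by
  have hB := Int.lt_floor_add_one B
  refine ⟨min ⌈u⌉ ⌊B⌋, mem_Icc_ceil_floor.2 ⟨?_, ?_⟩, ?_⟩
  · push_cast; exact le_min (hu.1.trans (Int.le_ceil u)) (by linarith)
  · push_cast; exact (min_le_right _ _).trans (Int.floor_le B)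
  · rcases le_total ⌈u⌉ ⌊B⌋ with h | h
    · rw [min_eq_left h, abs_le]
      constructor <;> linarith [Int.le_ceil u, Int.ceil_lt_add_one u]
    · have h' : (⌊B⌋ : ℝ) ≤ ⌈u⌉ := by exact_mod_cast h
      rw [min_eq_right h, abs_le]
      constructor <;> linarith [hu.2, Int.ceil_lt_add_one u]

end IntegerPoints

namespace Sigma1

variable {σ : ℝ → ℝ}

theorem sigma_neg (h1 : Sigma1 σ) (x : ℝ) : σ (-x) = 1 - σ x := by linarith [h1 x]

theorem sigma_zero (h1 : Sigma1 σ) : σ 0 = 1 / 2 := by linarith [h1 0, neg_zero (G := ℝ)]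

theorem phiFn_eq (h1 : Sigma1 σ) (t : ℝ) : phiFn σ t = (σ (1 + t) + σ (1 - t) - 1) / 2 := by
  rw [phiFn, show t - 1 = -(1 - t) by ring, h1.sigma_neg, add_comm t]
  ring

end Sigma1

section Kernel

variable {σ : ℝ → ℝ}

theorem phiFn_nonneg (hmono : Monotone σ) (t : ℝ) : 0 ≤ phiFn σ t := by
  have := hmono (show t - 1 ≤ t + 1 by linarith)
  unfold phiFn; linarith

theorem sigma_ge_chord (h1 : Sigma1 σ) (h2 : Sigma2 σ) {s t : ℝ} (hs : 0 ≤ s) (hst : s ≤ t)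
    (ht : 0 < t) : 1 / 2 + s / t * (σ t - 1 / 2) ≤ σ s := by
  have hw : s / t ≤ 1 := (div_le_one ht).2 hst
  have := h2.2.2 (Set.mem_Ici.2 le_rfl) (Set.mem_Ici.2 ht.le) (sub_nonneg.2 hw)
    (div_nonneg hs ht.le) (sub_add_cancel 1 (s / t))
  simp only [smul_eq_mul, mul_zero, zero_add, div_mul_cancel₀ _ ht.ne', h1.sigma_zero] at this
  linarith

theorem half_lt_sigma_two (hσ : Sigmoidal σ) (h1 : Sigma1 σ) (h2 : Sigma2 σ) : 1 / 2 < σ 2 := by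
  obtain ⟨t, hσt, ht⟩ :=
    ((hσ.2.2.eventually (lt_mem_nhds (by norm_num : (1 : ℝ) / 2 < 1))).and
      (eventually_ge_atTop 2)).exists
  have := sigma_ge_chord h1 h2 zero_le_two ht (by linarith)
  have : 0 < 2 / t * (σ t - 1 / 2) := mul_pos (by positivity) (by linarith)
  linarith

theorem phiFn_ge (h1 : Sigma1 σ) (h2 : Sigma2 σ) {t : ℝ} (ht : |t| ≤ 1) :
    (σ 2 - 1 / 2) / 2 ≤ phiFn σ t := by
  obtain ⟨ht₁, ht₂⟩ := abs_le.1 ht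
  have hplus := sigma_ge_chord h1 h2 (s := 1 + t) (t := 2) (by linarith) (by linarith) two_pos
  have hminus := sigma_ge_chord h1 h2 (s := 1 - t) (t := 2) (by linarith) (by linarith) two_pos
  rw [h1.phiFn_eq]
  linarith

theorem phiFn_le (hσ : Sigmoidal σ) (hmono : Monotone σ) (h1 : Sigma1 σ) (t : ℝ) :
    phiFn σ t ≤ σ (1 - |t|) / 2 := by
  have hle : ∀ y, σ y ≤ 1 := hmono.ge_of_tendsto hσ.2.2
  rw [h1.phiFn_eq]
  rcases abs_cases t with ⟨h, -⟩ | ⟨h, -⟩ <;> rw [h]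
  · linarith [hle (1 + t)]
  · rw [sub_neg_eq_add]; linarith [hle (1 - t)]

end Kernel

section Decay

variable {g : ℝ → ℝ} {α : ℝ}

theorem tendsto_mul_of_isBigO_abs_rpow (hα : 0 < α)
    (hg : g =O[atBot] fun y => |y| ^ (-α - 1)) : Tendsto (fun y => y * g y) atBot (𝓝 0) := by
  refine ((Asymptotics.isBigO_refl (fun y : ℝ => y) atBot).mul hg).trans_tendsto ?_
  rw [tendsto_zero_iff_norm_tendsto_zero]
  refine ((tendsto_rpow_neg_atTop hα).comp tendsto_abs_atBot_atTop).congr' ?_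
  filter_upwards [eventually_lt_atBot 0] with y hy
  have hpos : 0 < |y| := abs_pos.2 hy.ne
  have e := Real.rpow_add hpos 1 (-α - 1)
  rw [Real.rpow_one, show 1 + (-α - 1) = -α by ring] at e
  rw [Function.comp_apply, norm_mul, Real.norm_eq_abs, Real.norm_eq_abs,
    abs_of_nonneg (Real.rpow_nonneg hpos.le _), e]

theorem tendsto_affine_mul_comp_of_isBigO_abs_rpow (hα : 0 < α)
    (hg : g =O[atBot] fun y => |y| ^ (-α - 1)) (B : ℝ) {d : ℝ} (hd : 0 < d) :
    Tendsto (fun n : ℕ => (n * B + 1) * g (1 - n * d)) atTop (𝓝 0) := by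
  have hy : Tendsto (fun n : ℕ => 1 - n * d) atTop atBot := by
    simp_rw [sub_eq_add_neg]
    exact tendsto_atBot_add_const_left _ 1
      (tendsto_neg_atTop_atBot.comp (tendsto_natCast_atTop_atTop.atTop_mul_const hd))
  have hg0 : Tendsto g atBot (𝓝 0) := by
    refine hg.trans_tendsto ?_
    simpa only [neg_add', Function.comp_def] using
      (tendsto_rpow_neg_atTop (by linarith : 0 < α + 1)).comp tendsto_abs_atBot_atTop
  have hlim := ((hg0.const_mul ((B + d) / d)).sub
    ((tendsto_mul_of_isBigO_abs_rpow hα hg).const_mul (B / d))).comp hy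
  rw [mul_zero, mul_zero, sub_zero] at hlim
  refine hlim.congr fun n => ?_
  simp only [Function.comp_apply]
  field_simp
  ring

end Decay

section Operator

variable {σ : ℝ → ℝ} {f : ℝ → ℝ} {a b x M d ε : ℝ} {n : ℕ}

theorem abs_sub_mul_phiFn_le (hσ : Sigmoidal σ) (hmono : Monotone σ) (h1 : Sigma1 σ)
    (hn : 0 < (n : ℝ)) (hx : x ∈ Set.Icc a b) (hM : ∀ y ∈ Set.Icc a b, |f y| ≤ M) (hε : 0 ≤ ε)
    (hf : ∀ y ∈ Set.Icc a b, |y - x| ≤ d → |f y - f x| ≤ ε) {k : ℤ}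
    (hk : (k : ℝ) / n ∈ Set.Icc a b) :
    |f (k / n) - f x| * phiFn σ (n * x - k) ≤ ε * phiFn σ (n * x - k) + M * σ (1 - n * d) := by
  have hφ := phiFn_nonneg hmono (n * x - k)
  have hM0 : 0 ≤ M := (abs_nonneg _).trans (hM x hx)
  have hσd : 0 ≤ σ (1 - n * d) := hmono.le_of_tendsto hσ.2.1 _
  by_cases hnear : |n * x - k| ≤ n * d
  · have hkx : |(k : ℝ) / n - x| ≤ d := by
      rw [show (k : ℝ) / n - x = -(n * x - k) / n by field_simp; ring, abs_div, abs_neg,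
        abs_of_pos hn, div_le_iff₀ hn]
      linarith
    linarith [mul_le_mul_of_nonneg_right (hf _ hk hkx) hφ, mul_nonneg hM0 hσd]
  · have hfk : |f (k / n) - f x| ≤ 2 * M :=
      (abs_sub _ _).trans (by linarith [hM _ hk, hM x hx])
    have hφk : phiFn σ (n * x - k) ≤ σ (1 - n * d) / 2 :=
      (phiFn_le hσ hmono h1 _).trans (by gcongr; exact hmono (by linarith))
    calc |f (k / n) - f x| * phiFn σ (n * x - k) ≤ 2 * M * (σ (1 - n * d) / 2) :=
          mul_le_mul hfk hφk hφ (by linarith)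
      _ ≤ ε * phiFn σ (n * x - k) + M * σ (1 - n * d) := by linarith [mul_nonneg hε hφ]

theorem abs_Fop_sub_le (hσ : Sigmoidal σ) (hmono : Monotone σ) (h1 : Sigma1 σ) (h2 : Sigma2 σ)
    (hn : 1 ≤ n * (b - a)) (hx : x ∈ Set.Icc a b) (hM : ∀ y ∈ Set.Icc a b, |f y| ≤ M)
    (hε : 0 ≤ ε) (hf : ∀ y ∈ Set.Icc a b, |y - x| ≤ d → |f y - f x| ≤ ε) :
    |Fop σ f a b n x - f x| ≤
      ε + M / ((σ 2 - 1 / 2) / 2) * ((n * (b - a) + 1) * σ (1 - n * d)) := by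
  have hnpos : (0 : ℝ) < n :=
    Nat.cast_pos.2 (Nat.pos_of_ne_zero fun h => by simp [h] at hn; linarith)
  have hnab : (n : ℝ) * a + 1 ≤ n * b := by linarith [mul_sub (n : ℝ) b a]
  have hnx : (n : ℝ) * x ∈ Set.Icc (n * a) (n * b) :=
    ⟨mul_le_mul_of_nonneg_left hx.1 hnpos.le, mul_le_mul_of_nonneg_left hx.2 hnpos.le⟩
  set S := Finset.Icc ⌈(n : ℝ) * a⌉ ⌊(n : ℝ) * b⌋
  have hmem : ∀ k ∈ S, (k : ℝ) / n ∈ Set.Icc a b := fun k hk => by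
    obtain ⟨hk₁, hk₂⟩ := mem_Icc_ceil_floor.1 hk
    exact ⟨(le_div_iff₀ hnpos).2 (by linarith), (div_le_iff₀ hnpos).2 (by linarith)⟩
  have hD : (σ 2 - 1 / 2) / 2 ≤ ∑ k ∈ S, phiFn σ (n * x - k) := by
    obtain ⟨k, hk, hkx⟩ := exists_mem_Icc_ceil_floor_abs_sub_le_one hnab hnx
    exact (phiFn_ge h1 h2 hkx).trans
      (Finset.single_le_sum (f := fun k : ℤ => phiFn σ (n * x - k))
        (fun k _ => phiFn_nonneg hmono _) hk)
  have hc : 0 < (σ 2 - 1 / 2) / 2 := by linarith [half_lt_sigma_two hσ h1 h2]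
  have hcard : (S.card : ℝ) ≤ n * (b - a) + 1 := by
    linarith [card_Icc_ceil_floor_le (A := n * a) (B := n * b) (by linarith), mul_sub (n : ℝ) b a]
  have hM0 : 0 ≤ M := (abs_nonneg _).trans (hM x hx)
  have hσd : 0 ≤ σ (1 - n * d) := hmono.le_of_tendsto hσ.2.1 _
  calc |Fop σ f a b n x - f x| ≤ ε + S.card * (M * σ (1 - n * d)) / ∑ k ∈ S, phiFn σ (n * x - k) :=
        abs_sum_mul_div_sum_sub_le S (fun k _ => phiFn_nonneg hmono _) (hc.trans_le hD)
          fun k hk => abs_sub_mul_phiFn_le hσ hmono h1 hnpos hx hM hε hf (hmem k hk)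
    _ ≤ ε + (n * (b - a) + 1) * (M * σ (1 - n * d)) / ((σ 2 - 1 / 2) / 2) := by gcongr
    _ = ε + M / ((σ 2 - 1 / 2) / 2) * ((n * (b - a) + 1) * σ (1 - n * d)) := by ring

end Operator

theorem pointwise_convergence_NN (σ : ℝ → ℝ) (α : ℝ) (hσ : Sigmoidal σ) (hmono : Monotone σ)
    (h1 : Sigma1 σ) (h2 : Sigma2 σ) (h3 : Sigma3 σ α)
    (a b : ℝ) (hab : a < b) (f : ℝ → ℝ) (hfb : ∃ M : ℝ, ∀ y ∈ Set.Icc a b, |f y| ≤ M)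
    (x : ℝ) (hx : x ∈ Set.Icc a b) (hfc : ContinuousWithinAt f (Set.Icc a b) x) :
    Tendsto (fun n : ℕ => Fop σ f a b n x) atTop (𝓝 (f x)) := by
  obtain ⟨M, hM⟩ := hfb
  refine Metric.tendsto_atTop.2 fun ε hε => ?_
  obtain ⟨δ, hδ, hfδ⟩ := Metric.continuousWithinAt_iff.1 hfc (ε / 2) (half_pos hε)
  have hf : ∀ y ∈ Set.Icc a b, |y - x| ≤ δ / 2 → |f y - f x| ≤ ε / 2 := fun y hy hyx =>
    (hfδ hy (by rw [Real.dist_eq]; linarith)).le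
  have htail := (tendsto_affine_mul_comp_of_isBigO_abs_rpow h3.1 h3.2 (b - a)
    (half_pos hδ)).const_mul (M / ((σ 2 - 1 / 2) / 2))
  rw [mul_zero] at htail
  have hlarge : ∀ᶠ n : ℕ in atTop, 1 ≤ n * (b - a) :=
    (tendsto_natCast_atTop_atTop.atTop_mul_const (sub_pos.2 hab)).eventually_ge_atTop 1
  obtain ⟨N, hN⟩ := eventually_atTop.1 ((htail.eventually (gt_mem_nhds (half_pos hε))).and hlarge)
  refine ⟨N, fun n hn => ?_⟩
  obtain ⟨hsmall, hn⟩ := hN n hn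
  rw [Real.dist_eq]
  linarith [abs_Fop_sub_le hσ hmono h1 h2 hn hx hM (half_pos hε).le hf]
end

section
/- Let σ be a nondecreasing sigmoidal function satisfying (Σ1)–(Σ4) with parameters m ≥ 2 and β > m + 1, let a < b be integers, and let δ > 0 with a + δ < b − δ. Then for each s = 1, …, m and for all n ∈ ℕ⁺ with nδ ≥ K_s + 1, one has |m^n_0(φ_σ^{(s)}, nx)| ≤ (C_s/2)[(nδ+1)^{−β−1} + 2(nδ)^{−β−1} + (nδ−1)^{−β−1}] for every x ∈ I_δ := [a+δ, b−δ]; in particular m^n_0(φ_σ^{(s)}, nx) = O(n^{−β−1}) as n → +∞, uniformly with respect to x ∈ I_δ. -/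
open Filter Topology MeasureTheory

/-!
Since `φ_σ^{(s)}(y) = (σ^{(s)}(y + 1) - σ^{(s)}(y - 1)) / 2`, the sum
`∑_{k = na}^{nb} φ_σ^{(s)}(nx - k)` telescopes to four values of `σ^{(s)}`, taken at
`nx - na + 1`, `nx - na`, `nx - nb` and `nx - nb - 1`. For `x ∈ [a + δ, b - δ]` these points lie
at distance at least `nδ` from the origin, where (Σ4) bounds `σ^{(s)}` by `C_s (nδ)^{-β-1}`.
-/

lemma iteratedDeriv_phiFn {σ : ℝ → ℝ} {s : ℕ} (hσ : ContDiff ℝ s σ) (x : ℝ) :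
    iteratedDeriv s (phiFn σ) x
      = (iteratedDeriv s σ (x + 1) - iteratedDeriv s σ (x - 1)) / 2 := by
  have hshift (c : ℝ) : ContDiffAt ℝ s (fun y => σ (y + c)) x :=
    (hσ.comp (contDiff_id.add contDiff_const)).contDiffAt
  have hsub := hshift (-1)
  simp only [← sub_eq_add_neg] at hsub
  change iteratedDeriv s (fun y => (σ (y + 1) - σ (y - 1)) / 2) x = _
  rw [iteratedDeriv_div_const, iteratedDeriv_fun_sub (hshift 1) hsub,
    iteratedDeriv_comp_add_const, iteratedDeriv_comp_sub_const]

theorem Int.sum_Icc_sub_add_one {G : Type*} [AddCommGroup G] (f : ℤ → G) {A B : ℤ}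
    (hAB : A - 1 ≤ B) : ∑ k ∈ Finset.Icc A B, (f k - f (k + 1)) = f A - f (B + 1) := by
  induction B, hAB using Int.leInduction with
  | base => simp
  | succ B hB ih =>
    rw [← Finset.insert_Icc_right_eq_Icc_add_one (by omega), Finset.sum_insert (by simp), ih]
    abel

lemma sum_Icc_iteratedDeriv_phiFn {σ : ℝ → ℝ} {s : ℕ} (hσ : ContDiff ℝ s σ) (u : ℝ)
    {A B : ℤ} (hAB : A - 1 ≤ B) :
    ∑ k ∈ Finset.Icc A B, iteratedDeriv s (phiFn σ) (u - k)
      = (iteratedDeriv s σ (u - A + 1) + iteratedDeriv s σ (u - A)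
          - iteratedDeriv s σ (u - B) - iteratedDeriv s σ (u - B - 1)) / 2 := by
  set F : ℤ → ℝ := fun k => (iteratedDeriv s σ (u - k + 1) + iteratedDeriv s σ (u - k)) / 2
  have hterm (k : ℤ) : iteratedDeriv s (phiFn σ) (u - k) = F k - F (k + 1) := by
    simp only [F, iteratedDeriv_phiFn hσ]
    push_cast
    ring_nf
  rw [Finset.sum_congr rfl fun k _ => hterm k, Int.sum_Icc_sub_add_one F hAB]
  simp only [F]
  push_cast
  ring_nf

lemma abs_le_mul_rpow_of_decay {g : ℝ → ℝ} {p K C : ℝ} (hp : p ≤ 0) (hK : 0 < K)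
    (hC : 0 ≤ C) (hdecay : ∀ y, K ≤ |y| → |g y| ≤ C * |y| ^ p) {y t : ℝ} (hKt : K ≤ t)
    (hty : t ≤ |y|) :
    |g y| ≤ C * t ^ p :=
  (hdecay y (hKt.trans hty)).trans <|
    mul_le_mul_of_nonneg_left (Real.rpow_le_rpow_of_nonpos (hK.trans_le hKt) hty hp) hC

lemma abs_sum_Icc_iteratedDeriv_phiFn_le {σ : ℝ → ℝ} {s : ℕ} (hσ : ContDiff ℝ s σ)
    {p K C : ℝ} (hp : p ≤ 0) (hK : 0 < K) (hC : 0 ≤ C)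
    (hdecay : ∀ y, K ≤ |y| → |iteratedDeriv s σ y| ≤ C * |y| ^ p)
    {A B : ℤ} {u d : ℝ} (hKd : K ≤ d) (hA : A + d ≤ u) (hB : u ≤ B - d) :
    |∑ k ∈ Finset.Icc A B, iteratedDeriv s (phiFn σ) (u - k)|
      ≤ C * (d ^ p + (d + 1) ^ p) := by
  have hAB : A ≤ B := by exact_mod_cast (by linarith : (A : ℝ) ≤ B)
  have hbound {y t : ℝ} (hKt : K ≤ t) (hty : t ≤ |y|) :=
    abs_le.mp (abs_le_mul_rpow_of_decay hp hK hC hdecay hKt hty)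
  have h1 := hbound (by linarith) (le_abs.mpr (.inl (by linarith : d + 1 ≤ u - A + 1)))
  have h2 := hbound hKd (le_abs.mpr (.inl (by linarith : d ≤ u - A)))
  have h3 := hbound hKd (le_abs.mpr (.inr (by linarith : d ≤ -(u - B))))
  have h4 := hbound (by linarith) (le_abs.mpr (.inr (by linarith : d + 1 ≤ -(u - B - 1))))
  rw [sum_Icc_iteratedDeriv_phiFn hσ u (by omega), abs_le]
  constructor <;> linarith

theorem trunc_moment_zero_deriv_estimate_general (σ : ℝ → ℝ) (β : ℝ) (m : ℕ) (K C : ℕ → ℝ)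
    (h4 : Sigma4 σ m β K C) (a b : ℤ)
    (δ : ℝ) (hδ : 0 < δ)
    (s : ℕ) (hs1 : 1 ≤ s) (hsm : s ≤ m) :
    (∀ n : ℕ, 1 ≤ n → K s + 1 ≤ (n : ℝ) * δ →
      ∀ x ∈ Set.Icc ((a : ℝ) + δ) ((b : ℝ) - δ),
        |∑ k ∈ Finset.Icc ((n : ℤ) * a) ((n : ℤ) * b),
            iteratedDeriv s (phiFn σ) ((n : ℝ) * x - (k : ℝ))|
          ≤ (C s / 2) * (((n : ℝ) * δ + 1) ^ (-β - 1) + 2 * ((n : ℝ) * δ) ^ (-β - 1)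
              + ((n : ℝ) * δ - 1) ^ (-β - 1))) ∧
    (∃ D : ℝ, ∃ N : ℕ, ∀ n : ℕ, N ≤ n →
      ∀ x ∈ Set.Icc ((a : ℝ) + δ) ((b : ℝ) - δ),
        |∑ k ∈ Finset.Icc ((n : ℤ) * a) ((n : ℤ) * b),
            iteratedDeriv s (phiFn σ) ((n : ℝ) * x - (k : ℝ))|
          ≤ D * (n : ℝ) ^ (-β - 1)) := by
  obtain ⟨-, hβ, hσ, hderiv⟩ := h4
  obtain ⟨hK, hC, hdecay⟩ := hderiv s hs1 hsm
  have hp : -β - 1 ≤ 0 := by linarith [(Nat.cast_nonneg m : (0 : ℝ) ≤ m)]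
  have hscaled (n : ℕ) (hn : K s ≤ n * δ) (x : ℝ)
      (hx : x ∈ Set.Icc ((a : ℝ) + δ) (b - δ)) :
      |∑ k ∈ Finset.Icc ((n : ℤ) * a) ((n : ℤ) * b), iteratedDeriv s (phiFn σ) (n * x - k)|
        ≤ C s * ((n * δ) ^ (-β - 1) + (n * δ + 1) ^ (-β - 1)) := by
    have hxa := mul_le_mul_of_nonneg_left hx.1 n.cast_nonneg
    have hxb := mul_le_mul_of_nonneg_left hx.2 n.cast_nonneg
    refine abs_sum_Icc_iteratedDeriv_phiFn_le (hσ.of_le (by exact_mod_cast hsm)) hp hK hC.le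
      hdecay hn ?_ ?_ <;> push_cast <;> linarith
  refine ⟨fun n _ hn x hx => (hscaled n (by linarith) x hx).trans ?_, ?_⟩
  · have := Real.rpow_le_rpow_of_nonpos (by linarith)
      (by linarith : (n : ℝ) * δ - 1 ≤ n * δ + 1) hp
    linarith [mul_le_mul_of_nonneg_left this hC.le]
  · refine ⟨2 * C s * δ ^ (-β - 1), ⌈K s / δ⌉₊, fun n hn x hx => ?_⟩
    have hn' : K s ≤ n * δ := (div_le_iff₀ hδ).mp (Nat.ceil_le.mp hn)
    have := Real.rpow_le_rpow_of_nonpos (by linarith)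
      (by linarith : (n : ℝ) * δ ≤ n * δ + 1) hp
    calc _ ≤ C s * ((n * δ) ^ (-β - 1) + (n * δ + 1) ^ (-β - 1)) := hscaled n hn' x hx
      _ ≤ 2 * C s * (n * δ) ^ (-β - 1) := by
        linarith [mul_le_mul_of_nonneg_left this hC.le]
      _ = _ := by rw [Real.mul_rpow n.cast_nonneg hδ.le]; ring

theorem trunc_moment_zero_deriv_estimate (σ : ℝ → ℝ) (α β : ℝ) (m : ℕ) (K C : ℕ → ℝ)
    (hσ : Sigmoidal σ) (hmono : Monotone σ) (h1 : Sigma1 σ) (h2 : Sigma2 σ) (h3 : Sigma3 σ α)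
    (h4 : Sigma4 σ m β K C) (a b : ℤ) (hab : a < b)
    (δ : ℝ) (hδ : 0 < δ) (hδ2 : (a : ℝ) + δ < (b : ℝ) - δ)
    (s : ℕ) (hs1 : 1 ≤ s) (hsm : s ≤ m) :
    (∀ n : ℕ, 1 ≤ n → K s + 1 ≤ (n : ℝ) * δ →
      ∀ x ∈ Set.Icc ((a : ℝ) + δ) ((b : ℝ) - δ),
        |∑ k ∈ Finset.Icc ((n : ℤ) * a) ((n : ℤ) * b),
            iteratedDeriv s (phiFn σ) ((n : ℝ) * x - (k : ℝ))|
          ≤ (C s / 2) * (((n : ℝ) * δ + 1) ^ (-β - 1) + 2 * ((n : ℝ) * δ) ^ (-β - 1)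
              + ((n : ℝ) * δ - 1) ^ (-β - 1))) ∧
    (∃ D : ℝ, ∃ N : ℕ, ∀ n : ℕ, N ≤ n →
      ∀ x ∈ Set.Icc ((a : ℝ) + δ) ((b : ℝ) - δ),
        |∑ k ∈ Finset.Icc ((n : ℤ) * a) ((n : ℤ) * b),
            iteratedDeriv s (phiFn σ) ((n : ℝ) * x - (k : ℝ))|
          ≤ D * (n : ℝ) ^ (-β - 1)) :=
  trunc_moment_zero_deriv_estimate_general σ β m K C h4 a b δ hδ s hs1 hsm
end
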